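/- For G-compositions α = ((a_1,g_1),...,(a_k,g_k)) and β = ((b_1,h_1),...,(b_l,h_l)) of n, the product σ_α σ_β in (ZΣ_n^G)^{S_n} equals the sum of σ_{M'} over all k×l matrices M compatible with α and β, where each entry is 0 or a pair (a,g) with a > 0 and g ∈ G, row i entries have sizes summing to a_i, column j entries have sizes summing to b_j, nonzero entries in position (i,j) have color h_j g_i, and M' is the G-composition obtained by reading the nonzero entries of M row by row. -/

import Mathlib

/-- An (unvalidated) ordered `G`-partition of `[n]`: a list of pairs (block, group label). -/
abbrev OGP (n : ℕ) (G : Type*) := List (Finset (Fin n) × G)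

/-- Multiplication of ordered `G`-partitions: the pairs `(B_i ∩ C_j, h_j * g_i)` in
lexicographic order of `(i, j)`, omitting those with empty intersection. -/
def mulOGP {n : ℕ} {G : Type*} [Mul G] (P Q : OGP n G) : OGP n G :=
  P.flatMap fun bg => Q.filterMap fun ch =>
    if (bg.1 ∩ ch.1).Nonempty then some (bg.1 ∩ ch.1, ch.2 * bg.2) else none

/-- `P` is an ordered `G`-partition of `[n]`: blocks nonempty, pairwise disjoint, union `[n]`. -/
def IsOGP {n : ℕ} {G : Type*} (P : OGP n G) : Prop :=
  (∀ p ∈ P, p.1.Nonempty) ∧ P.Pairwise (fun p q => Disjoint p.1 q.1) ∧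
    P.foldr (fun p s => p.1 ∪ s) ∅ = Finset.univ

/-- The type of an ordered `G`-partition: the `G`-composition of block sizes and labels. -/
def typeOGP {n : ℕ} {G : Type*} (P : OGP n G) : List (ℕ × G) :=
  P.map fun p => (p.1.card, p.2)

/-- `α` is a `G`-composition of `n`. -/
def IsGComp (n : ℕ) {G : Type*} (α : List (ℕ × G)) : Prop :=
  (∀ p ∈ α, 0 < p.1) ∧ (α.map Prod.fst).sum = n

instance {n : ℕ} {G : Type*} [Mul G] : Mul (OGP n G) := ⟨mulOGP⟩

/-- `σ_α`: the sum (in `ℤΣ_n^G`) of all ordered `G`-partitions of type `α`. -/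
noncomputable def sigmaA {n : ℕ} {G : Type*} (α : List (ℕ × G)) :
    MonoidAlgebra ℤ (OGP n G) :=
  ∑ᶠ P ∈ {P : OGP n G | IsOGP P ∧ typeOGP P = α}, MonoidAlgebra.single P 1

/-- The size of a matrix entry: `|0| = 0` and `|(a, g)| = a`. -/
def entrySize {G : Type*} (x : Option (ℕ × G)) : ℕ := x.elim 0 Prod.fst

/-- `M` is compatible with `α` and `β`: row sums of sizes give the parts of `α`, column
sums give the parts of `β`, entries are positive, and the entry in position `(i,j)` has
color `h_j g_i`. -/
def Compat {G : Type*} [Mul G] (α β : List (ℕ × G))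
    (M : Matrix (Fin α.length) (Fin β.length) (Option (ℕ × G))) : Prop :=
  (∀ i, ∑ j, entrySize (M i j) = (α.get i).1) ∧
  (∀ j, ∑ i, entrySize (M i j) = (β.get j).1) ∧
  (∀ i j p, M i j = some p → 0 < p.1 ∧ p.2 = (β.get j).2 * (α.get i).2)

/-- `M'`: the `G`-composition obtained by reading the nonzero entries of `M` row by row. -/
def readMatrix {G : Type*} (α β : List (ℕ × G))
    (M : Matrix (Fin α.length) (Fin β.length) (Option (ℕ × G))) : List (ℕ × G) :=
  (List.finRange α.length).flatMap fun i =>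
    (List.finRange β.length).filterMap fun j => M i j

/-!
Write an ordered `G`-partition of type `γ` as a family `i ↦ (B_i, g_i)` indexed by
`Fin γ.length`. For `P = (B_i, g_i)` of type `α` and `Q = (C_j, h_j)` of type `β`, the blocks of
`P * Q` are the nonempty `B_i ∩ C_j`, read row by row, and the matrix `M(P, Q)` of their sizes
and colours `h_j g_i` is compatible with `α` and `β`; the type of `P * Q` is `M(P, Q)'`.
Conversely, the blocks of an ordered `G`-partition `R` of type `M'` can be placed at the nonzero
positions of `M`, and then `B_i` and `C_j` must be the unions along row `i` and column `j`.
Hence `(P, Q) ↦ (M(P, Q), P * Q)` is a bijection onto the pairs `(M, R)` with `M` compatible and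
`R` of type `M'`, and both sides of the identity are the sums over these pairs.
-/

open Finset

namespace List

variable {J X Y : Type*}

theorem filterMap_product {A B : Type*} (L₁ : List A) (L₂ : List B) (f : A → B → Option X) :
    (L₁ ×ˢ L₂).filterMap (fun p => f p.1 p.2) = L₁.flatMap fun a => L₂.filterMap (f a) := by
  simp [SProd.sprod, List.product, filterMap_flatMap, filterMap_map]

theorem mem_finRange_product {k l : ℕ} (p : Fin k × Fin l) : p ∈ finRange k ×ˢ finRange l :=
  mem_product.2 ⟨mem_finRange _, mem_finRange _⟩

theorem exists_filterMap_eq_of_map_eq {t : Y → X} {f : J → Option X} :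
    ∀ {L : List J} {R : List Y}, L.Nodup → R.map t = L.filterMap f →
      ∃ g : J → Option Y, (∀ j ∈ L, (g j).map t = f j) ∧ L.filterMap g = R
  | [], R, _, h => ⟨fun _ => none, by simp, by simpa using h.symm⟩
  | j :: L, R, hL, h => by
    classical
    obtain ⟨hjL, hL⟩ := nodup_cons.mp hL
    have hsplit : ∃ (o : Option Y) (R' : List Y), o.map t = f j ∧ R = o.toList ++ R' ∧
        R'.map t = L.filterMap f := by
      cases hfj : f j with
      | none => exact ⟨none, R, rfl, rfl, by simpa [hfj] using h⟩
      | some x =>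
        rw [filterMap_cons, hfj, map_eq_cons_iff] at h
        obtain ⟨y, R', rfl, rfl, hR'⟩ := h
        exact ⟨some y, R', rfl, rfl, hR'⟩
    obtain ⟨o, R', ho, rfl, hR'⟩ := hsplit
    obtain ⟨g, hgt, hgR⟩ := exists_filterMap_eq_of_map_eq hL hR'
    have hg : L.filterMap (Function.update g j o) = L.filterMap g :=
      filterMap_congr fun i hi => Function.update_of_ne (ne_of_mem_of_not_mem hi hjL) _ _
    refine ⟨Function.update g j o, ?_, ?_⟩
    · rintro i (_ | ⟨_, hi⟩)
      · simpa using ho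
      · rw [Function.update_of_ne (ne_of_mem_of_not_mem hi hjL)]
        exact hgt i hi
    · cases o <;> simp [hg, hgR]

theorem eqOn_of_filterMap_eq {g g' : J → Option Y} :
    ∀ {L : List J}, (∀ j ∈ L, (g j).isSome = (g' j).isSome) →
      L.filterMap g = L.filterMap g' → ∀ j ∈ L, g j = g' j
  | [], _, _ => by simp
  | j :: L, hpat, h => by
    have hL := eqOn_of_filterMap_eq (L := L) (fun i hi => hpat i (mem_cons_of_mem _ hi))
    have hj := hpat j mem_cons_self
    rw [filterMap_cons, filterMap_cons] at h
    cases hgj : g j <;> cases hg'j : g' j <;> simp_all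

end List

def IsIndexedPartition {ι α : Type*} (B : ι → Finset α) : Prop :=
  Pairwise (fun i j => Disjoint (B i) (B j)) ∧ ∀ x, ∃ i, x ∈ B i

namespace IsIndexedPartition

variable {ι κ α : Type*}

theorem comp_swap {D : ι × κ → Finset α} (hD : IsIndexedPartition D) :
    IsIndexedPartition fun q : κ × ι => D q.swap :=
  ⟨fun _ _ h => hD.1 fun h' => h (Prod.swap_injective h'), fun x =>
    (hD.2 x).elim fun q hq => ⟨q.swap, hq⟩⟩

variable [DecidableEq α]

theorem biUnion_inter [Fintype ι] {C : ι → Finset α} (hC : IsIndexedPartition C)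
    (B : Finset α) : univ.biUnion (fun i => B ∩ C i) = B := by
  ext x
  simp only [mem_biUnion, mem_univ, true_and, mem_inter]
  exact ⟨fun ⟨_, hx, _⟩ => hx, fun hx => (hC.2 x).imp fun _ hi => ⟨hx, hi⟩⟩

theorem sum_card_inter [Fintype ι] {C : ι → Finset α} (hC : IsIndexedPartition C)
    (B : Finset α) : ∑ i, #(B ∩ C i) = #B := by
  conv_rhs => rw [← hC.biUnion_inter B]
  refine (card_biUnion fun i _ j _ hij => ?_).symm
  exact (hC.1 hij).mono inter_subset_right inter_subset_right

theorem inter {B : ι → Finset α} {C : κ → Finset α} (hB : IsIndexedPartition B)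
    (hC : IsIndexedPartition C) : IsIndexedPartition fun p : ι × κ => B p.1 ∩ C p.2 := by
  refine ⟨fun p q hpq => ?_, fun x => ?_⟩
  · obtain hi | hj : p.1 ≠ q.1 ∨ p.2 ≠ q.2 := not_and_or.1 (mt Prod.ext_iff.2 hpq)
    · exact (hB.1 hi).mono inter_subset_left inter_subset_left
    · exact (hC.1 hj).mono inter_subset_right inter_subset_right
  · obtain ⟨i, hi⟩ := hB.2 x
    obtain ⟨j, hj⟩ := hC.2 x
    exact ⟨(i, j), mem_inter.2 ⟨hi, hj⟩⟩

variable [Fintype κ] {D : ι × κ → Finset α}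

theorem card_biUnion_row (hD : IsIndexedPartition D) (i : ι) :
    #(univ.biUnion fun j => D (i, j)) = ∑ j, #(D (i, j)) :=
  card_biUnion fun _ _ _ _ hjj' => hD.1 fun h => hjj' (congrArg Prod.snd h)

theorem rows (hD : IsIndexedPartition D) :
    IsIndexedPartition fun i => univ.biUnion fun j => D (i, j) := by
  refine ⟨fun i i' hii' => ?_, fun x => ?_⟩
  · simp only [disjoint_biUnion_left, disjoint_biUnion_right]
    exact fun j _ j' _ => hD.1 fun h => hii' (congrArg Prod.fst h)
  · obtain ⟨⟨i, j⟩, hx⟩ := hD.2 x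
    exact ⟨i, mem_biUnion.2 ⟨j, mem_univ _, hx⟩⟩

theorem row_inter_col [Fintype ι] (hD : IsIndexedPartition D) (i : ι) (j : κ) :
    (univ.biUnion fun j' => D (i, j')) ∩ (univ.biUnion fun i' => D (i', j)) = D (i, j) := by
  refine subset_antisymm (fun x hx => ?_) fun x hx =>
    mem_inter.2 ⟨mem_biUnion.2 ⟨j, mem_univ _, hx⟩, mem_biUnion.2 ⟨i, mem_univ _, hx⟩⟩
  simp only [mem_inter, mem_biUnion, mem_univ, true_and] at hx
  obtain ⟨⟨j', hj'⟩, ⟨i', hi'⟩⟩ := hx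
  obtain ⟨rfl, rfl⟩ : i = i' ∧ j' = j := by
    by_contra h
    refine disjoint_left.1 (hD.1 fun h' => h ?_) hj' hi'
    simp_all [Prod.ext_iff]
  exact hj'

end IsIndexedPartition

theorem finsum_mem_mul_finsum_mem {ι κ R : Type*} [NonUnitalNonAssocSemiring R] {s : Set ι}
    {t : Set κ} (hs : s.Finite) (ht : t.Finite) (f : ι → R) (g : κ → R) :
    (∑ᶠ i ∈ s, f i) * ∑ᶠ j ∈ t, g j = ∑ᶠ p ∈ s ×ˢ t, f p.1 * g p.2 := by
  rw [finsum_mem_eq_finite_toFinset_sum _ hs, finsum_mem_eq_finite_toFinset_sum _ ht,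
    finsum_mem_eq_finite_toFinset_sum _ (hs.prod ht), sum_mul_sum, ← Set.Finite.toFinset_prod,
    sum_product]

theorem finsum_mem_finsum_mem_eq_finsum_mem_prod {ι κ M : Type*} [AddCommMonoid M] {s : Set ι}
    {t : ι → Set κ} (hs : s.Finite) (ht : ∀ i ∈ s, (t i).Finite) (f : ι → κ → M) :
    ∑ᶠ i ∈ s, ∑ᶠ j ∈ t i, f i j = ∑ᶠ p ∈ {p : ι × κ | p.1 ∈ s ∧ p.2 ∈ t p.1}, f p.1 p.2 := by
  have hunion : {p : ι × κ | p.1 ∈ s ∧ p.2 ∈ t p.1} = ⋃ i ∈ s, Prod.mk i '' t i := by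
    ext ⟨i, j⟩
    simp [and_comm]
  have hdisj : s.PairwiseDisjoint fun i => Prod.mk i '' t i := fun i _ i' _ hii' =>
    Set.disjoint_left.2 fun _ ⟨_, _, hj⟩ ⟨_, _, hj'⟩ =>
      hii' (by rw [← hj, Prod.ext_iff] at hj'; exact hj'.1.symm)
  rw [hunion, finsum_mem_biUnion hdisj hs fun i hi => (ht i hi).image _]
  exact finsum_mem_congr rfl fun i _ =>
    (finsum_mem_image (f := fun p => f p.1 p.2) (Prod.mk_right_injective i).injOn).symm

section Blocks

variable {α G : Type*}

def blockType (p : Finset α × G) : ℕ × G := (#p.1, p.2)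

def optBlock (o : Option (Finset α × G)) : Finset α := o.elim ∅ Prod.fst

theorem mem_optBlock {o : Option (Finset α × G)} {x : α} : x ∈ optBlock o ↔ ∃ p ∈ o, x ∈ p.1 := by
  cases o <;> simp [optBlock]

theorem entrySize_map_blockType (o : Option (Finset α × G)) :
    entrySize (o.map blockType) = #(optBlock o) := by
  cases o <;> rfl

variable [DecidableEq α] [Mul G]

def meet (p q : Finset α × G) : Option (Finset α × G) :=
  if (p.1 ∩ q.1).Nonempty then some (p.1 ∩ q.1, q.2 * p.2) else none

theorem optBlock_meet (p q : Finset α × G) : optBlock (meet p q) = p.1 ∩ q.1 := by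
  unfold meet
  split_ifs with h
  · rfl
  · exact (not_nonempty_iff_eq_empty.1 h).symm

theorem eq_of_meet_eq_some {p q r : Finset α × G} (h : meet p q = some r) :
    r.1.Nonempty ∧ r = (p.1 ∩ q.1, q.2 * p.2) := by
  unfold meet at h
  split_ifs at h with hne
  cases h
  exact ⟨hne, rfl⟩

theorem meet_eq_of_inter_eq {p q : Finset α × G} {o : Option (Finset α × G)}
    (h : p.1 ∩ q.1 = optBlock o) (ho : ∀ y ∈ o, y.1.Nonempty ∧ y.2 = q.2 * p.2) :
    meet p q = o := by
  unfold meet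
  rw [h]
  cases o with
  | none => simp [optBlock]
  | some y =>
    obtain ⟨hne, hy⟩ := ho y rfl
    simp [optBlock, hne, ← hy]

end Blocks

section OrderedPartitions

variable {n : ℕ} {G : Type*}

theorem mem_foldr_union {L : OGP n G} {x : Fin n} :
    x ∈ L.foldr (fun p s => p.1 ∪ s) ∅ ↔ ∃ p ∈ L, x ∈ p.1 := by
  induction L with
  | nil => simp
  | cons p L ih => simp [ih]

theorem isOGP_filterMap_iff {J : Type*} {L : List J} (hL : L.Nodup) (hmem : ∀ j, j ∈ L)
    (f : J → Option (Finset (Fin n) × G)) :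
    IsOGP (L.filterMap f) ↔
      (∀ j, ∀ p ∈ f j, p.1.Nonempty) ∧ IsIndexedPartition fun j => optBlock (f j) := by
  have hdisj : ∀ a b, (∀ p ∈ f a, ∀ q ∈ f b, Disjoint p.1 q.1) ↔
      Disjoint (optBlock (f a)) (optBlock (f b)) := by
    intro a b
    cases f a <;> cases f b <;> simp [optBlock]
  have : Std.Symm fun a b => Disjoint (optBlock (f a)) (optBlock (f b)) :=
    ⟨fun _ _ h => h.symm⟩
  have hpair : L.Pairwise (fun a b => Disjoint (optBlock (f a)) (optBlock (f b))) ↔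
      Pairwise fun a b => Disjoint (optBlock (f a)) (optBlock (f b)) :=
    ⟨fun h a b hab => h.forall (hmem a) (hmem b) hab,
      fun h => hL.pairwise_of_forall_ne fun _ _ _ _ hab => h hab⟩
  rw [IsOGP, IsIndexedPartition, List.pairwise_filterMap, eq_univ_iff_forall, ← hpair]
  refine and_congr ?_ (and_congr (List.Pairwise.iff hdisj) ?_)
  · exact ⟨fun h j p hp => h p (List.mem_filterMap.2 ⟨j, hmem j, hp⟩), fun h p hp =>
      let ⟨j, _, hj⟩ := List.mem_filterMap.1 hp; h j p hj⟩
  · refine forall_congr' fun x => mem_foldr_union.trans ⟨?_, ?_⟩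
    · rintro ⟨p, hp, hx⟩
      obtain ⟨j, -, hj⟩ := List.mem_filterMap.1 hp
      exact ⟨j, mem_optBlock.2 ⟨p, hj, hx⟩⟩
    · rintro ⟨j, hx⟩
      obtain ⟨p, hp, hx⟩ := mem_optBlock.1 hx
      exact ⟨p, List.mem_filterMap.2 ⟨j, hmem j, hp⟩, hx⟩

theorem isOGP_ofFn_iff {k : ℕ} (u : Fin k → Finset (Fin n) × G) :
    IsOGP (List.ofFn u) ↔ (∀ i, (u i).1.Nonempty) ∧ IsIndexedPartition fun i => (u i).1 := by
  rw [List.ofFn_eq_map, ← List.filterMap_eq_map,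
    isOGP_filterMap_iff (List.nodup_finRange k) (List.mem_finRange)]
  simp [optBlock]

theorem typeOGP_filterMap {J : Type*} (L : List J) (f : J → Option (Finset (Fin n) × G)) :
    typeOGP (L.filterMap f) = L.filterMap fun j => (f j).map blockType :=
  List.map_filterMap

theorem typeOGP_ofFn_eq_iff {γ : List (ℕ × G)} (u : Fin γ.length → Finset (Fin n) × G) :
    typeOGP (List.ofFn u) = γ ↔ ∀ i, blockType (u i) = γ.get i := by
  have hmap : typeOGP (List.ofFn u) = List.ofFn (blockType ∘ u) := List.map_ofFn
  rw [hmap, List.ext_get_iff]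
  simp [Fin.forall_iff]

theorem ofFn_mul_ofFn [Mul G] {k l : ℕ} (u : Fin k → Finset (Fin n) × G)
    (v : Fin l → Finset (Fin n) × G) :
    (List.ofFn u * List.ofFn v : OGP n G) =
      (List.finRange k ×ˢ List.finRange l).filterMap fun p => meet (u p.1) (v p.2) := by
  rw [List.filterMap_product (f := fun i j => meet (u i) (v j))]
  show mulOGP _ _ = _
  simp only [mulOGP, List.ofFn_eq_map, List.flatMap_map, List.filterMap_map]
  rfl

theorem readMatrix_eq_filterMap [Mul G] (α β : List (ℕ × G))
    (M : Matrix (Fin α.length) (Fin β.length) (Option (ℕ × G))) :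
    readMatrix α β M = (List.finRange _ ×ˢ List.finRange _).filterMap fun p => M p.1 p.2 :=
  (List.filterMap_product _ _ M).symm

variable (n) in
def ogpsOfType (γ : List (ℕ × G)) : Set (OGP n G) := {P | IsOGP P ∧ typeOGP P = γ}

variable (n) in
def familiesOfType (γ : List (ℕ × G)) : Set (Fin γ.length → Finset (Fin n) × G) :=
  List.ofFn ⁻¹' ogpsOfType n γ

theorem mem_familiesOfType_iff {γ : List (ℕ × G)} {u : Fin γ.length → Finset (Fin n) × G} :
    u ∈ familiesOfType n γ ↔ ((∀ i, (u i).1.Nonempty) ∧ IsIndexedPartition fun i => (u i).1) ∧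
      ∀ i, blockType (u i) = γ.get i :=
  and_congr (isOGP_ofFn_iff u) (typeOGP_ofFn_eq_iff u)

theorem image_ofFn_familiesOfType (γ : List (ℕ × G)) :
    List.ofFn '' familiesOfType n γ = ogpsOfType n γ := by
  refine Set.image_preimage_eq_of_subset fun P hP => ?_
  have hlen : P.length = γ.length := by simpa [typeOGP] using congrArg List.length hP.2
  exact ⟨fun i => P[i.1], List.ext_getElem (by simp [hlen]) fun _ _ _ => by simp⟩

theorem familiesOfType_finite (γ : List (ℕ × G)) : (familiesOfType n γ).Finite := by
  refine (Set.finite_range fun (B : Fin γ.length → Finset (Fin n)) i => (B i, (γ.get i).2)).subset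
    fun u hu => ⟨fun i => (u i).1, funext fun i =>
      Prod.ext rfl (congrArg Prod.snd ((mem_familiesOfType_iff.1 hu).2 i)).symm⟩

theorem ogpsOfType_finite (γ : List (ℕ × G)) : (ogpsOfType n γ).Finite := by
  rw [← image_ofFn_familiesOfType]
  exact (familiesOfType_finite γ).image _

theorem sigmaA_eq_finsum_familiesOfType (γ : List (ℕ × G)) :
    sigmaA (n := n) γ = ∑ᶠ u ∈ familiesOfType n γ, MonoidAlgebra.single (List.ofFn u) 1 := by
  show ∑ᶠ P ∈ ogpsOfType n γ, _ = _
  rw [← image_ofFn_familiesOfType, finsum_mem_image List.ofFn_injective.injOn]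

theorem isIndexedPartition_of_mem_familiesOfType {γ : List (ℕ × G)}
    {u : Fin γ.length → Finset (Fin n) × G} (hu : u ∈ familiesOfType n γ) :
    IsIndexedPartition fun i => (u i).1 :=
  (mem_familiesOfType_iff.1 hu).1.2

theorem eq_of_forall_inter_eq {γ : List (ℕ × G)} {ι : Type*} [Fintype ι]
    {u u' : Fin γ.length → Finset (Fin n) × G} (hu : u ∈ familiesOfType n γ)
    (hu' : u' ∈ familiesOfType n γ) {C C' : ι → Finset (Fin n)} (hC : IsIndexedPartition C)
    (hC' : IsIndexedPartition C') (h : ∀ i j, (u i).1 ∩ C j = (u' i).1 ∩ C' j) : u = u' := by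
  funext i
  refine Prod.ext ?_ ?_
  · rw [← hC.biUnion_inter (u i).1, ← hC'.biUnion_inter (u' i).1]
    simp only [h]
  · have htype : blockType (u i) = blockType (u' i) :=
      ((mem_familiesOfType_iff.1 hu).2 i).trans ((mem_familiesOfType_iff.1 hu').2 i).symm
    exact (congrArg Prod.snd htype :)

theorem rows_mem_familiesOfType {γ : List (ℕ × G)} (hγ : ∀ p ∈ γ, 0 < p.1) {κ : Type*}
    [Fintype κ] {D : Fin γ.length × κ → Finset (Fin n)} (hD : IsIndexedPartition D)
    (hcard : ∀ i, ∑ j, #(D (i, j)) = (γ.get i).1) :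
    (fun i => (univ.biUnion fun j => D (i, j), (γ.get i).2)) ∈ familiesOfType n γ := by
  have hrow : ∀ i, #(univ.biUnion fun j => D (i, j)) = (γ.get i).1 :=
    fun i => (hD.card_biUnion_row i).trans (hcard i)
  refine mem_familiesOfType_iff.2 ⟨⟨fun i => ?_, hD.rows⟩, fun i => Prod.ext (hrow i) rfl⟩
  rw [← card_pos, hrow]
  exact hγ _ (List.get_mem _ _)

end OrderedPartitions

section Bijection

variable {n : ℕ} {G : Type*} [Mul G]

def intersectionMatrix {k l : ℕ} (u : Fin k → Finset (Fin n) × G) (v : Fin l → Finset (Fin n) × G) :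
    Matrix (Fin k) (Fin l) (Option (ℕ × G)) :=
  fun i j => (meet (u i) (v j)).map blockType

theorem isOGP_ofFn_mul_ofFn {k l : ℕ} {u : Fin k → Finset (Fin n) × G}
    {v : Fin l → Finset (Fin n) × G} (hu : IsOGP (List.ofFn u)) (hv : IsOGP (List.ofFn v)) :
    IsOGP (List.ofFn u * List.ofFn v) := by
  rw [isOGP_ofFn_iff] at hu hv
  rw [ofFn_mul_ofFn, isOGP_filterMap_iff ((List.nodup_finRange k).product (List.nodup_finRange l))
    List.mem_finRange_product]
  refine ⟨fun p r hr => (eq_of_meet_eq_some hr).1, ?_⟩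
  simpa only [optBlock_meet] using hu.2.inter hv.2

theorem typeOGP_ofFn_mul_ofFn (α β : List (ℕ × G)) (u : Fin α.length → Finset (Fin n) × G)
    (v : Fin β.length → Finset (Fin n) × G) :
    typeOGP (List.ofFn u * List.ofFn v) = readMatrix α β (intersectionMatrix u v) := by
  rw [ofFn_mul_ofFn, typeOGP_filterMap, readMatrix_eq_filterMap]
  rfl

variable {α β : List (ℕ × G)}

theorem compat_intersectionMatrix {u : Fin α.length → Finset (Fin n) × G}
    {v : Fin β.length → Finset (Fin n) × G} (hu : u ∈ familiesOfType n α)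
    (hv : v ∈ familiesOfType n β) : Compat α β (intersectionMatrix u v) := by
  rw [mem_familiesOfType_iff] at hu hv
  have hsize : ∀ i j, entrySize (intersectionMatrix u v i j) = #((u i).1 ∩ (v j).1) :=
    fun i j => by rw [intersectionMatrix, entrySize_map_blockType, optBlock_meet]
  refine ⟨fun i => ?_, fun j => ?_, fun i j p hp => ?_⟩
  · simp only [hsize, hv.1.2.sum_card_inter, ← hu.2 i, blockType]
  · simp only [hsize, Finset.inter_comm _ (v j).1, hu.1.2.sum_card_inter, ← hv.2 j, blockType]
  · obtain ⟨r, hr, rfl⟩ := Option.map_eq_some_iff.1 hp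
    obtain ⟨hne, rfl⟩ := eq_of_meet_eq_some hr
    exact ⟨Finset.card_pos.2 hne, by rw [← hu.2 i, ← hv.2 j]; rfl⟩

def matrixAndProduct {k l : ℕ}
    (p : (Fin k → Finset (Fin n) × G) × (Fin l → Finset (Fin n) × G)) :
    Matrix (Fin k) (Fin l) (Option (ℕ × G)) × OGP n G :=
  (intersectionMatrix p.1 p.2, List.ofFn p.1 * List.ofFn p.2)

theorem injOn_matrixAndProduct :
    Set.InjOn matrixAndProduct (familiesOfType n α ×ˢ familiesOfType n β) := by
  rintro ⟨u, v⟩ ⟨hu, hv⟩ ⟨u', v'⟩ ⟨hu', hv'⟩ h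
  obtain ⟨hM, hprod⟩ := Prod.ext_iff.1 h
  simp only [matrixAndProduct, ofFn_mul_ofFn] at hM hprod
  have hmeet := List.eqOn_of_filterMap_eq (fun p _ => by
    simpa [intersectionMatrix] using congrArg Option.isSome (congrFun (congrFun hM p.1) p.2)) hprod
  have hinter : ∀ i j, (u i).1 ∩ (v j).1 = (u' i).1 ∩ (v' j).1 := fun i j => by
    simpa only [optBlock_meet] using
      congrArg optBlock (hmeet (i, j) (List.mem_finRange_product _))
  refine Prod.ext (eq_of_forall_inter_eq hu hu' (isIndexedPartition_of_mem_familiesOfType hv)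
    (isIndexedPartition_of_mem_familiesOfType hv') hinter) ?_
  refine eq_of_forall_inter_eq hv hv' (isIndexedPartition_of_mem_familiesOfType hu)
    (isIndexedPartition_of_mem_familiesOfType hu') fun j i => ?_
  rw [inter_comm, hinter, inter_comm]

theorem exists_families_of_compat (hα : ∀ p ∈ α, 0 < p.1) (hβ : ∀ p ∈ β, 0 < p.1)
    {M : Matrix (Fin α.length) (Fin β.length) (Option (ℕ × G))} (hM : Compat α β M)
    {D : Fin α.length × Fin β.length → Option (Finset (Fin n) × G)}
    (hDM : ∀ p, (D p).map blockType = M p.1 p.2) (hne : ∀ p, ∀ y ∈ D p, y.1.Nonempty)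
    (hD : IsIndexedPartition fun p => optBlock (D p)) :
    ∃ u ∈ familiesOfType n α, ∃ v ∈ familiesOfType n β, ∀ i j, meet (u i) (v j) = D (i, j) := by
  have hsize : ∀ i j, #(optBlock (D (i, j))) = entrySize (M i j) := fun i j => by
    rw [← entrySize_map_blockType, hDM]
  refine ⟨_, rows_mem_familiesOfType hα hD fun i => ?_, _,
    rows_mem_familiesOfType hβ hD.comp_swap fun j => ?_, fun i j => ?_⟩
  · simp only [hsize, hM.1 i]
  · simp only [Prod.swap, hsize, hM.2.1 j]
  · refine meet_eq_of_inter_eq (hD.row_inter_col i j) fun y hy => ⟨hne _ y hy, ?_⟩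
    exact (hM.2.2 i j (blockType y) (by rw [← hDM (i, j), hy]; rfl)).2

theorem bijOn_matrixAndProduct (hα : ∀ p ∈ α, 0 < p.1) (hβ : ∀ p ∈ β, 0 < p.1) :
    Set.BijOn matrixAndProduct (familiesOfType n α ×ˢ familiesOfType n β)
      {p | Compat α β p.1 ∧ p.2 ∈ ogpsOfType n (readMatrix α β p.1)} := by
  refine ⟨fun uv ⟨hu, hv⟩ => ⟨compat_intersectionMatrix hu hv, isOGP_ofFn_mul_ofFn hu.1 hv.1,
    typeOGP_ofFn_mul_ofFn α β uv.1 uv.2⟩, injOn_matrixAndProduct, ?_⟩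
  rintro ⟨M, R⟩ ⟨hM, hR, hRt⟩
  have hL := (List.nodup_finRange α.length).product (List.nodup_finRange β.length)
  rw [readMatrix_eq_filterMap] at hRt
  obtain ⟨D, hDM, rfl⟩ := List.exists_filterMap_eq_of_map_eq (t := blockType) hL hRt
  obtain ⟨hne, hD⟩ := (isOGP_filterMap_iff hL List.mem_finRange_product D).1 hR
  obtain ⟨u, hu, v, hv, huv⟩ := exists_families_of_compat hα hβ hM
    (fun p => hDM p (List.mem_finRange_product p)) hne hD
  refine ⟨(u, v), ⟨hu, hv⟩, Prod.ext (funext₂ fun i j => ?_) ?_⟩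
  · simp only [matrixAndProduct, intersectionMatrix, huv]
    exact hDM (i, j) (List.mem_finRange_product _)
  · simp only [matrixAndProduct, ofFn_mul_ofFn, huv]

end Bijection

section Sums

variable {n : ℕ} {G : Type*} [Mul G]

theorem setOf_compat_finite (α β : List (ℕ × G)) : {M | Compat α β M}.Finite := by
  refine (Set.Finite.pi' fun i => Set.Finite.pi' fun j => ((Set.finite_Iic (α.get i).1).image
    fun a => some (a, (β.get j).2 * (α.get i).2)).insert none).subset fun M hM i j => ?_
  cases hij : M i j with
  | none => exact Set.mem_insert _ _
  | some p =>
    refine Set.mem_insert_of_mem _ ⟨p.1, ?_, by rw [← (hM.2.2 i j p hij).2]⟩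
    rw [Set.mem_Iic, ← hM.1 i]
    calc p.1 = entrySize (M i j) := by rw [hij]; rfl
      _ ≤ ∑ j', entrySize (M i j') :=
        single_le_sum (f := fun j' => entrySize (M i j')) (fun _ _ => Nat.zero_le _) (mem_univ j)

theorem sigmaA_mul_sigmaA_eq_finsum (α β : List (ℕ × G)) :
    sigmaA (n := n) α * sigmaA (n := n) β = ∑ᶠ p ∈ familiesOfType n α ×ˢ familiesOfType n β,
      MonoidAlgebra.single (List.ofFn p.1 * List.ofFn p.2) 1 := by
  rw [sigmaA_eq_finsum_familiesOfType, sigmaA_eq_finsum_familiesOfType,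
    finsum_mem_mul_finsum_mem (familiesOfType_finite α) (familiesOfType_finite β)]
  simp only [MonoidAlgebra.single_mul_single, one_mul]

theorem finsum_sigmaA_readMatrix_eq_finsum (α β : List (ℕ × G)) :
    ∑ᶠ M ∈ {M | Compat α β M}, sigmaA (n := n) (readMatrix α β M) =
      ∑ᶠ p ∈ {p : Matrix (Fin α.length) (Fin β.length) (Option (ℕ × G)) × OGP n G |
        Compat α β p.1 ∧ p.2 ∈ ogpsOfType n (readMatrix α β p.1)}, MonoidAlgebra.single p.2 1 :=
  finsum_mem_finsum_mem_eq_finsum_mem_prod (setOf_compat_finite α β)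
    (fun _ _ => ogpsOfType_finite _) fun _ P => MonoidAlgebra.single P 1

end Sums

/-- the multiplication rule in `(ℤΣ_n^G)^{S_n}`:
`σ_α σ_β = Σ_M σ_{M'}` over all matrices `M` compatible with `α` and `β`. -/
theorem sigmaA_mul_sigmaA {n : ℕ} {G : Type*} [Group G]
    (α β : List (ℕ × G)) (hα : IsGComp n α) (hβ : IsGComp n β) :
    sigmaA (n := n) α * sigmaA (n := n) β =
      ∑ᶠ M ∈ {M : Matrix (Fin α.length) (Fin β.length) (Option (ℕ × G)) | Compat α β M},
        sigmaA (n := n) (readMatrix α β M) := by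
  rw [sigmaA_mul_sigmaA_eq_finsum, finsum_sigmaA_readMatrix_eq_finsum]
  exact finsum_mem_eq_of_bijOn matrixAndProduct (bijOn_matrixAndProduct hα.1 hβ.1) fun _ _ => rfl
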